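/- In the setting of the Puiseux expansion construction, let 𝒜_{j,β} be the subring of the Mal'cev-Neumann ring generated by all open truncations u_{j'}(β') with (j',β') <_lex (j,β). If g ∈ 𝒜_{j,β}[u_j(β)] and λ ∈ Γ₁ with v(g) < λ, then the open truncation g(λ) again lies in 𝒜_{j,β}[u_j(β)]. -/

import Mathlib

/-- The open truncation `f(β) = ∑_{γ < β} a_γ t^γ` of a generalized power series. -/
noncomputable def truncLT {Γ A : Type*} [AddCommGroup Γ] [LinearOrder Γ] [IsOrderedAddMonoid Γ] [CommRing A]
    (f : HahnSeries Γ A) (β : Γ) : HahnSeries Γ A where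
  coeff γ := if γ < β then f.coeff γ else 0
  isPWO_support' := f.isPWO_support.mono (fun γ hγ => by
    by_cases h : γ < β
    · simpa [Function.mem_support, h] using hγ
    · simp [Function.mem_support, h] at hγ)

/-!
Let `R` be a subring of Hahn series. The elements `f ∈ R` all of whose truncations lie in `R`
form a subring; the only nontrivial point is products. If `m` is the least exponent of `f`
with `m + c ≥ λ` for some exponent `c` of `h`, then
`(f h)(λ) = f(m) h + ((f - f(m)) h(c))(λ)`, because `f(m) h` lives below `λ` and
`(f - f(m)) (h - h(c))` lives at or above `λ`. Iterating on the pair `(f - f(m), h(c))`,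
the exponents `c` strictly decrease in the well-ordered support of `h`, so after finitely
many steps the truncation is an honest product (the finite product formula). Taking
`R = closure S`, this subring contains `S`, hence all of `closure S`.
-/

section Truncation

variable {Γ A : Type*} [AddCommGroup Γ] [LinearOrder Γ] [IsOrderedAddMonoid Γ] [CommRing A]

@[simp]
lemma truncLT_coeff (f : HahnSeries Γ A) (β γ : Γ) :
    (truncLT f β).coeff γ = if γ < β then f.coeff γ else 0 := rfl

lemma truncLT_zero (β : Γ) : truncLT (0 : HahnSeries Γ A) β = 0 := by
  ext γ
  simp

lemma truncLT_add (f g : HahnSeries Γ A) (β : Γ) :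
    truncLT (f + g) β = truncLT f β + truncLT g β := by
  ext γ
  simp only [truncLT_coeff, HahnSeries.coeff_add]
  split_ifs <;> simp

lemma truncLT_neg (f : HahnSeries Γ A) (β : Γ) : truncLT (-f) β = -truncLT f β := by
  ext γ
  simp only [truncLT_coeff, HahnSeries.coeff_neg]
  split_ifs <;> simp

lemma truncLT_sub (f g : HahnSeries Γ A) (β : Γ) :
    truncLT (f - g) β = truncLT f β - truncLT g β := by
  rw [sub_eq_add_neg, truncLT_add, truncLT_neg, sub_eq_add_neg]

lemma truncLT_one (β : Γ) : truncLT (1 : HahnSeries Γ A) β = if 0 < β then 1 else 0 := by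
  ext γ
  by_cases hβ : 0 < β <;> by_cases hγ : γ = 0 <;> simp [hβ, hγ]

lemma truncLT_truncLT (f : HahnSeries Γ A) (β μ : Γ) :
    truncLT (truncLT f β) μ = truncLT f (min β μ) := by
  ext γ
  simp only [truncLT_coeff, lt_min_iff]
  split_ifs <;> tauto

lemma support_truncLT_subset (f : HahnSeries Γ A) (β : Γ) :
    (truncLT f β).support ⊆ f.support ∩ Set.Iio β := by
  intro γ hγ
  by_cases h : γ < β <;> simp_all [HahnSeries.mem_support]

lemma support_sub_truncLT_subset (f : HahnSeries Γ A) (β : Γ) :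
    (f - truncLT f β).support ⊆ Set.Ici β := by
  intro γ hγ
  by_contra h
  simp_all [HahnSeries.mem_support]

lemma truncLT_mul_eq_self {f g : HahnSeries Γ A} {β : Γ}
    (h : ∀ a ∈ f.support, ∀ b ∈ g.support, a + b < β) : truncLT (f * g) β = f * g := by
  ext γ
  simp only [truncLT_coeff, ite_eq_left_iff, not_lt]
  intro hβγ
  by_contra hγ
  obtain ⟨a, ha, b, hb, rfl⟩ := HahnSeries.support_mul_subset (Ne.symm hγ)
  exact (h a ha b hb).not_ge hβγ

lemma truncLT_mul_eq_zero {f g : HahnSeries Γ A} {β : Γ}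
    (h : ∀ a ∈ f.support, ∀ b ∈ g.support, β ≤ a + b) : truncLT (f * g) β = 0 := by
  ext γ
  simp only [truncLT_coeff, HahnSeries.coeff_zero, ite_eq_right_iff]
  intro hγβ
  by_contra hγ
  obtain ⟨a, ha, b, hb, rfl⟩ := HahnSeries.support_mul_subset hγ
  exact (h a ha b hb).not_gt hγβ

lemma truncLT_mul_eq_self_or_exists (f h : HahnSeries Γ A) (lam : Γ) :
    truncLT (f * h) lam = f * h ∨ ∃ m, ∃ c ∈ h.support,
      truncLT (f * h) lam = truncLT f m * h + truncLT ((f - truncLT f m) * truncLT h c) lam := by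
  set reach : Set Γ := {a | a ∈ f.support ∧ ∃ b ∈ h.support, lam ≤ a + b}
  rcases reach.eq_empty_or_nonempty with hB | hB
  · refine .inl (truncLT_mul_eq_self fun a ha b hb => lt_of_not_ge fun hle => ?_)
    exact hB.subset ⟨ha, b, hb, hle⟩
  have hreach_wf : reach.IsWF := f.isWF_support.mono fun a ha => ha.1
  set m := hreach_wf.min hB
  obtain ⟨-, c, hc, hmc⟩ := hreach_wf.min_mem hB
  refine .inr ⟨m, c, hc, ?_⟩
  have hlow : truncLT (truncLT f m * h) lam = truncLT f m * h := by
    refine truncLT_mul_eq_self fun a ha b hb => lt_of_not_ge fun hle => ?_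
    obtain ⟨haf, ham⟩ := support_truncLT_subset f m ha
    exact hreach_wf.not_lt_min hB ⟨haf, b, hb, hle⟩ ham
  have hhigh : truncLT ((f - truncLT f m) * (h - truncLT h c)) lam = 0 :=
    truncLT_mul_eq_zero fun a ha b hb =>
      hmc.trans (add_le_add (support_sub_truncLT_subset f m ha)
        (support_sub_truncLT_subset h c hb))
  calc truncLT (f * h) lam
      = truncLT (truncLT f m * h + (f - truncLT f m) * truncLT h c
          + (f - truncLT f m) * (h - truncLT h c)) lam := by congr 1; ring
    _ = _ := by rw [truncLT_add, truncLT_add, hlow, hhigh, add_zero]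

section TruncCore

variable (R : Subring (HahnSeries Γ A))

def truncCore : Set (HahnSeries Γ A) := {f | f ∈ R ∧ ∀ μ, truncLT f μ ∈ R}

variable {R}

lemma truncLT_mem_truncCore {f : HahnSeries Γ A} (hf : f ∈ truncCore R) (β : Γ) :
    truncLT f β ∈ truncCore R :=
  ⟨hf.2 β, fun μ => truncLT_truncLT f β μ ▸ hf.2 _⟩

lemma sub_mem_truncCore {f g : HahnSeries Γ A} (hf : f ∈ truncCore R) (hg : g ∈ truncCore R) :
    f - g ∈ truncCore R :=
  ⟨sub_mem hf.1 hg.1, fun μ => truncLT_sub f g μ ▸ sub_mem (hf.2 μ) (hg.2 μ)⟩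

lemma truncLT_mul_mem_or_exists {f h : HahnSeries Γ A} (hf : f ∈ truncCore R)
    (hh : h ∈ truncCore R) (lam : Γ) :
    truncLT (f * h) lam ∈ R ∨ ∃ c ∈ h.support, ∃ f' ∈ truncCore R,
      truncLT (f' * truncLT h c) lam ∈ R → truncLT (f * h) lam ∈ R := by
  rcases truncLT_mul_eq_self_or_exists f h lam with heq | ⟨m, c, hc, heq⟩
  · exact .inl (by rw [heq]; exact mul_mem hf.1 hh.1)
  · refine .inr ⟨c, hc, f - truncLT f m, sub_mem_truncCore hf (truncLT_mem_truncCore hf m),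
      fun hmem => by rw [heq]; exact add_mem (mul_mem (hf.2 m) hh.1) hmem⟩

lemma truncLT_mul_mem_of_mem_truncCore {f g : HahnSeries Γ A} (hf : f ∈ truncCore R)
    (hg : g ∈ truncCore R) (lam : Γ) : truncLT (f * g) lam ∈ R := by
  have below : ∀ c ∈ g.support, ∀ f ∈ truncCore R, truncLT (f * truncLT g c) lam ∈ R := by
    intro c hc
    refine g.isWF_support.induction hc
      (P := fun c => ∀ f ∈ truncCore R, truncLT (f * truncLT g c) lam ∈ R) fun c _ ih f hf => ?_
    rcases truncLT_mul_mem_or_exists hf (truncLT_mem_truncCore hg c) lam with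
      hmem | ⟨c', hc', f', hf', himp⟩
    · exact hmem
    · obtain ⟨hc'g, hc'c⟩ := support_truncLT_subset g c hc'
      rw [truncLT_truncLT, min_eq_right hc'c.le] at himp
      exact himp (ih c' hc'g hc'c f' hf')
  rcases truncLT_mul_mem_or_exists hf hg lam with hmem | ⟨c, hc, f', hf', himp⟩
  · exact hmem
  · exact himp (below c hc f' hf')

variable (R)

def truncCoreSubring : Subring (HahnSeries Γ A) where
  carrier := truncCore R
  zero_mem' := ⟨zero_mem R, fun μ => by rw [truncLT_zero]; exact zero_mem R⟩
  one_mem' := ⟨one_mem R, fun μ => by rw [truncLT_one]; split_ifs <;> simp⟩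
  add_mem' hf hg :=
    ⟨add_mem hf.1 hg.1, fun μ => by rw [truncLT_add]; exact add_mem (hf.2 μ) (hg.2 μ)⟩
  neg_mem' hf := ⟨neg_mem hf.1, fun μ => by rw [truncLT_neg]; exact neg_mem (hf.2 μ)⟩
  mul_mem' hf hg := ⟨mul_mem hf.1 hg.1, truncLT_mul_mem_of_mem_truncCore hf hg⟩

end TruncCore

end Truncation

theorem stmt16_general {Γ A : Type*} [AddCommGroup Γ] [LinearOrder Γ] [IsOrderedAddMonoid Γ] [CommRing A]
    (S : Set (HahnSeries Γ A))
    (hS : ∀ f ∈ S, ∀ lam : Γ, truncLT f lam ∈ S)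
    (g : HahnSeries Γ A) (hg : g ∈ Subring.closure S)
    (lam : Γ) :
    truncLT g lam ∈ Subring.closure S := by
  have hclosure : Subring.closure S ≤ truncCoreSubring (Subring.closure S) :=
    Subring.closure_le.2 fun f hf =>
      ⟨Subring.subset_closure hf, fun μ => Subring.subset_closure (hS f hf μ)⟩
  exact (hclosure hg).2 lam

/-- (Corollaire 5.4.) Let `S` be a set of generalized power series closed
under open truncation — such as the set of all truncations `u_{j'}(β')` with
`(j',β') ≤_lex (j,β)` generating the ring `𝒜_{j,β}[u_j(β)]`. If `g` lies in the subring
generated by `S` and `λ ∈ Γ` with `v(g) < λ`, then the open truncation `g(λ)` again lies in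
that subring. -/
theorem stmt16 {Γ A : Type*} [AddCommGroup Γ] [LinearOrder Γ] [IsOrderedAddMonoid Γ] [CommRing A] [IsDomain A]
    (S : Set (HahnSeries Γ A))
    (hS : ∀ f ∈ S, ∀ lam : Γ, truncLT f lam ∈ S)
    (g : HahnSeries Γ A) (hg : g ∈ Subring.closure S)
    (g0 : g ≠ 0) (lam : Γ) (hlt : g.order < lam) :
    truncLT g lam ∈ Subring.closure S :=
  stmt16_general S hS g hg lam
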